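/- Let Σ be a σ-algebra on Y, π a probability measure on (Y,Σ), p a positive integer, and 𝒮 ⊆ Σ a collection of measurable sets. Assume that every subcollection 𝒞 ⊆ 𝒮 with ⋂_{S∈𝒞} S = ∅ contains p sets S_1,…,S_p ∈ 𝒞 with ⋂_{j=1}^p S_j = ∅. Suppose (S_y)_{y∈Y} is a family with S_y ∈ 𝒮 and y ∉ S_y for every y ∈ Y. Then there exists y ∈ Y with π(S_y) ≤ 1 − 1/p. -/
import Mathlib


open MeasureTheory ENNReal

theorem stmt_5 {Y : Type*} [MeasurableSpace Y] (π : Measure Y)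
    [IsProbabilityMeasure π] (p : ℕ) (hp : 0 < p)
    (𝒮 : Set (Set Y)) (hmeas : ∀ S ∈ 𝒮, MeasurableSet S)
    (hHelly : ∀ 𝒞 ⊆ 𝒮, ⋂₀ 𝒞 = ∅ →
      ∃ f : Fin p → Set Y, (∀ j, f j ∈ 𝒞) ∧ ⋂ j, f j = ∅)
    (S : Y → Set Y) (hS : ∀ y, S y ∈ 𝒮) (hny : ∀ y, y ∉ S y) :
    ∃ y, π (S y) ≤ 1 - 1 / (p : ℝ≥0∞) := by
  obtain ⟨f, hf𝒞, hfint⟩ := hHelly (Set.range S)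
    (by rintro _ ⟨y, rfl⟩; exact hS y)
    (by
      ext x
      simp only [Set.mem_sInter, Set.mem_range, forall_exists_index,
        Set.mem_empty_iff_false, iff_false]
      intro h
      exact hny x (h (S x) x rfl))
  choose y hy using fun j => hf𝒞 j
  have hcover : ⋃ j, (S (y j))ᶜ = Set.univ := by
    rw [← Set.compl_iInter, Set.compl_univ_iff]
    rw [← hfint]
    exact Set.iInter_congr hy
  have hsum : (1 : ℝ≥0∞) ≤ ∑ j : Fin p, π ((S (y j))ᶜ) := by
    calc (1 : ℝ≥0∞) = π Set.univ := (measure_univ).symm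
    _ = π (⋃ j, (S (y j))ᶜ) := by rw [hcover]
    _ ≤ ∑ j : Fin p, π ((S (y j))ᶜ) := measure_iUnion_fintype_le _ _
  have hne : (Finset.univ : Finset (Fin p)).Nonempty := ⟨⟨0, hp⟩, Finset.mem_univ _⟩
  obtain ⟨j, -, hj⟩ := Finset.exists_max_image Finset.univ
    (fun j => π ((S (y j))ᶜ)) hne
  have hbound : (1 : ℝ≥0∞) ≤ π ((S (y j))ᶜ) * p := by
    calc (1 : ℝ≥0∞) ≤ ∑ i : Fin p, π ((S (y i))ᶜ) := hsum
    _ ≤ Finset.univ.card • π ((S (y j))ᶜ) :=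
        Finset.sum_le_card_nsmul _ _ _ (fun i _ => hj i (Finset.mem_univ i))
    _ = π ((S (y j))ᶜ) * p := by
        simp [Finset.card_univ, nsmul_eq_mul, mul_comm]
  have hdiv : 1 / (p : ℝ≥0∞) ≤ π ((S (y j))ᶜ) :=
    ENNReal.div_le_of_le_mul hbound
  refine ⟨y j, ?_⟩
  have hm : MeasurableSet (S (y j)) := hmeas _ (hS _)
  have hadd : π (S (y j)) + π ((S (y j))ᶜ) = 1 := by
    rw [measure_add_measure_compl hm, measure_univ]
  have heq : π (S (y j)) = 1 - π ((S (y j))ᶜ) :=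
    ENNReal.eq_sub_of_add_eq (by
      exact ne_top_of_le_ne_top one_ne_top (le_of_eq_of_le (by rfl) (prob_le_one))) hadd
  rw [heq]
  exact tsub_le_tsub_left hdiv 1
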